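/- For integers g ≥ 1 and n ≥ 2, the abelianization of the surface braid group B_n(Σ_{g,1}) (given by the presentation below) is isomorphic to ℤ^{2g} × ℤ/2ℤ; under this isomorphism the images of a_1,…,a_g,b_1,…,b_g freely generate the ℤ^{2g} factor and the common image of the σ_i generates the ℤ/2ℤ factor. -/

import Mathlib

/-- Generators of the surface braid group `B_n(Σ_{g,1})`: the braid generators
`σ_1, …, σ_{n-1}` (indexed by `Fin (n-1)`) and the surface generators
`a_1, …, a_g` and `b_1, …, b_g` (each indexed by `Fin g`). -/
abbrev SBGen (n g : ℕ) : Type := Fin (n - 1) ⊕ (Fin g ⊕ Fin g)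

/-- The braid generator `σ_{i+1}` as an element of the free group on the generators. -/
def sg (n g : ℕ) (i : Fin (n - 1)) : FreeGroup (SBGen n g) := FreeGroup.of (Sum.inl i)

/-- The surface generator `a_{i+1}` as an element of the free group on the generators. -/
def ag (n g : ℕ) (i : Fin g) : FreeGroup (SBGen n g) := FreeGroup.of (Sum.inr (Sum.inl i))

/-- The surface generator `b_{i+1}` as an element of the free group on the generators. -/
def bg (n g : ℕ) (i : Fin g) : FreeGroup (SBGen n g) := FreeGroup.of (Sum.inr (Sum.inr i))

open scoped commutatorElement

/-- The relators of Bellingeri's presentation of the surface braid group `B_n(Σ_{g,1})`: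
braid relations, commutation relations, and the mixed relations (R1), (R2).
Here `σ_{n-1}` is encoded as the index `l : Fin (n-1)` with `(l : ℕ) + 2 = n`. -/
def sbRels (n g : ℕ) : Set (FreeGroup (SBGen n g)) :=
  { r : FreeGroup (SBGen n g) |
    -- braid relations σᵢσᵢ₊₁σᵢ = σᵢ₊₁σᵢσᵢ₊₁
    (∃ i j : Fin (n - 1), (j : ℕ) = (i : ℕ) + 1 ∧
      r = sg n g i * sg n g j * sg n g i * (sg n g j * sg n g i * sg n g j)⁻¹) ∨
    -- braid relations σᵢσⱼ = σⱼσᵢ for |i - j| ≥ 2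
    (∃ i j : Fin (n - 1), ((i : ℕ) + 2 ≤ (j : ℕ) ∨ (j : ℕ) + 2 ≤ (i : ℕ)) ∧
      r = sg n g i * sg n g j * (sg n g j * sg n g i)⁻¹) ∨
    -- (R1) c σᵢ = σᵢ c for c ∈ A ∪ B and i ≤ n - 2 (1-based)
    (∃ (c : FreeGroup (SBGen n g)) (k : Fin g), (c = ag n g k ∨ c = bg n g k) ∧
      ∃ i : Fin (n - 1), (i : ℕ) + 2 < n ∧ r = c * sg n g i * (sg n g i * c)⁻¹) ∨
    -- (R1) [c σ_{n-1} c, σ_{n-1}] = 1 for c ∈ A ∪ B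
    (∃ (c : FreeGroup (SBGen n g)) (k : Fin g), (c = ag n g k ∨ c = bg n g k) ∧
      ∃ l : Fin (n - 1), (l : ℕ) + 2 = n ∧ r = ⁅c * sg n g l * c, sg n g l⁆) ∨
    -- (R2) aⱼ σ_{n-1} bⱼ = σ_{n-1} bⱼ σ_{n-1} aⱼ σ_{n-1}
    (∃ (j : Fin g) (l : Fin (n - 1)), (l : ℕ) + 2 = n ∧
      r = ag n g j * sg n g l * bg n g j *
        (sg n g l * bg n g j * sg n g l * ag n g j * sg n g l)⁻¹) ∨
    -- (R2) commutator relations for k < l'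
    (∃ (k l' : Fin g) (l : Fin (n - 1)), k < l' ∧ (l : ℕ) + 2 = n ∧
      (r = ⁅(sg n g l)⁻¹ * ag n g k * sg n g l, ag n g l'⁆ ∨
       r = ⁅(sg n g l)⁻¹ * bg n g k * sg n g l, bg n g l'⁆ ∨
       r = ⁅(sg n g l)⁻¹ * ag n g k * sg n g l, bg n g l'⁆ ∨
       r = ⁅(sg n g l)⁻¹ * bg n g k * sg n g l, ag n g l'⁆)) }

/-- The surface braid group `B_n(Σ_{g,1})`, presented by Bellingeri's presentation. -/
abbrev SurfaceBraidGroup (n g : ℕ) : Type := PresentedGroup (sbRels n g)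

/-! In the abelianization the braid relations identify all `σᵢ` with a single class `σ`, the
first (R2) relation `aⱼ σ bⱼ = σ bⱼ σ aⱼ σ` becomes `σ² = 1`, and all other relations become
trivial. Hence `aᵢ ↦ (eᵢ, 0, 0)`, `bᵢ ↦ (0, eᵢ, 0)`, `σᵢ ↦ (0, 0, 1)` kills every relator, and
conversely sending these three kinds of basis vectors of `ℤ^g × ℤ^g × ℤ/2` to the classes of
`aᵢ`, `bᵢ` and `σ` is well defined; the two maps are inverse to each other on generators. -/

theorem mul_mul_eq_iff_sq_eq_one {G : Type*} [CommGroup G] (a b s : G) :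
    a * s * b = s * b * s * a * s ↔ s ^ 2 = 1 := by
  rw [show s * b * s * a * s = a * s * b * s ^ 2 by rw [sq]; ac_rfl, left_eq_mul]

namespace SurfaceBraidGroup

abbrev AbModel (g : ℕ) : Type := (Fin g → ℤ) × (Fin g → ℤ) × ZMod 2

namespace AbModel

variable {g : ℕ} {A : Type*} [AddCommGroup A]

theorem addMonoidHom_ext {f f' : AbModel g →+ A}
    (ha : ∀ i, f (Pi.single i 1, 0, 0) = f' (Pi.single i 1, 0, 0))
    (hb : ∀ i, f (0, Pi.single i 1, 0) = f' (0, Pi.single i 1, 0))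
    (hs : f (0, 0, 1) = f' (0, 0, 1)) : f = f' := by
  have hfst : f.comp (.inl _ _) = f'.comp (.inl _ _) :=
    AddMonoidHom.functions_ext A _ _ fun i k => by
      simpa [← map_zsmul, ← Pi.single_smul', Prod.mk_zero_zero] using congr(k • $(ha i))
  have hsnd : (f.comp (.inr _ _)).comp (.inl _ _) = (f'.comp (.inr _ _)).comp (.inl _ _) :=
    AddMonoidHom.functions_ext A _ _ fun i k => by
      simpa [← map_zsmul, ← Pi.single_smul'] using congr(k • $(hb i))
  have hthd : (f.comp (.inr _ _)).comp (.inr _ _) = (f'.comp (.inr _ _)).comp (.inr _ _) := by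
    ext z
    obtain ⟨k, rfl⟩ := ZMod.intCast_surjective z
    simpa [← map_zsmul] using congr(k • $hs)
  rw [← f.coprod_unique, ← f'.coprod_unique, ← (f.comp (.inr _ _)).coprod_unique,
    ← (f'.comp (.inr _ _)).coprod_unique, hfst, hsnd, hthd]

def lift (a b : Fin g → A) (s : A) (hs : 2 • s = 0) : AbModel g →+ A :=
  (Fintype.linearCombination ℤ a).toAddMonoidHom.coprod
    ((Fintype.linearCombination ℤ b).toAddMonoidHom.coprod
      (ZMod.lift 2 ⟨zmultiplesHom A s, by simpa [two_nsmul, two_zsmul] using hs⟩))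

variable (a b : Fin g → A) (s : A) (hs : 2 • s = 0)

@[simp] theorem lift_single_fst (i : Fin g) : lift a b s hs (Pi.single i 1, 0, 0) = a i := by
  simp [lift]

@[simp] theorem lift_single_snd (i : Fin g) : lift a b s hs (0, Pi.single i 1, 0) = b i := by
  simp [lift]

@[simp] theorem lift_one_thd : lift a b s hs (0, 0, 1) = s := by
  simp only [lift, AddMonoidHom.coprod_apply, map_zero, zero_add]
  rw [← Int.cast_one, ZMod.lift_coe]
  simp

end AbModel

variable {n g : ℕ}

open Multiplicative in
def generatorImage : SBGen n g → Multiplicative (AbModel g)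
  | .inl _ => ofAdd (0, 0, 1)
  | .inr (.inl i) => ofAdd (Pi.single i 1, 0, 0)
  | .inr (.inr i) => ofAdd (0, Pi.single i 1, 0)

theorem lift_generatorImage_eq_one {r : FreeGroup (SBGen n g)} (hr : r ∈ sbRels n g) :
    FreeGroup.lift generatorImage r = 1 := by
  rcases hr with ⟨i, j, -, rfl⟩ | ⟨i, j, -, rfl⟩ | ⟨c, k, -, i, -, rfl⟩ | ⟨c, k, -, l, -, rfl⟩ |
    ⟨j, l, -, rfl⟩ | ⟨k, k', l, -, -, hr⟩
  · simp [sg, generatorImage]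
  · simp [sg, generatorImage]
  · rw [map_mul, map_inv, mul_inv_eq_one, map_mul, map_mul, mul_comm]
  · simp [map_commutatorElement, commutatorElement_eq_one_iff_commute, Commute.all]
  · simp only [map_mul, map_inv, mul_inv_eq_one, sg, ag, bg, FreeGroup.lift_apply_of, generatorImage]
    rw [mul_mul_eq_iff_sq_eq_one, ← ofAdd_nsmul, ofAdd_eq_one]
    simpa using ZMod.natCast_self 2
  · rcases hr with rfl | rfl | rfl | rfl <;>
      simp [map_commutatorElement, commutatorElement_eq_one_iff_commute, Commute.all]

def toModel : Abelianization (SurfaceBraidGroup n g) →* Multiplicative (AbModel g) :=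
  Abelianization.lift (PresentedGroup.toGroup fun _ => lift_generatorImage_eq_one)

@[simp] theorem toModel_of (x : SBGen n g) :
    toModel (Abelianization.of (PresentedGroup.of x)) = generatorImage x := by
  simp [toModel, PresentedGroup.toGroup.of]

def classOf : FreeGroup (SBGen n g) →* Abelianization (SurfaceBraidGroup n g) :=
  Abelianization.of.comp (PresentedGroup.mk _)

@[simp] theorem classOf_of (x : SBGen n g) :
    classOf (FreeGroup.of x) = Abelianization.of (PresentedGroup.of x) := rfl

theorem classOf_eq_one {r : FreeGroup (SBGen n g)} (hr : r ∈ sbRels n g) : classOf r = 1 := by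
  simp [classOf, PresentedGroup.one_of_mem hr]

theorem classOf_sg_eq_of_val_eq_succ {i j : Fin (n - 1)} (hij : (j : ℕ) = i + 1) :
    classOf (sg n g i) = classOf (sg n g j) := by
  have h := classOf_eq_one (g := g) (Or.inl ⟨i, j, hij, rfl⟩)
  rw [map_mul, map_inv, mul_inv_eq_one, map_mul, map_mul, map_mul, map_mul,
    mul_comm (classOf (sg n g j)) (classOf (sg n g i))] at h
  exact mul_left_cancel h

theorem classOf_sg_eq (i j : Fin (n - 1)) : classOf (sg n g i) = classOf (sg n g j) := by
  have h0 : 0 < n - 1 := i.pos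
  suffices h : ∀ k (hk : k < n - 1), classOf (sg n g ⟨k, hk⟩) = classOf (sg n g ⟨0, h0⟩) from
    (h i i.2).trans (h j j.2).symm
  intro k
  induction k with
  | zero => intro _; rfl
  | succ k ih => intro hk; exact (classOf_sg_eq_of_val_eq_succ rfl).symm.trans (ih (by omega))

theorem classOf_sg_sq (hg : 1 ≤ g) (i : Fin (n - 1)) : classOf (sg n g i) ^ 2 = 1 := by
  have hn : 2 ≤ n := by have := i.pos; omega
  have hl : n - 2 < n - 1 := by omega
  have h := classOf_eq_one
    (Or.inr (Or.inr (Or.inr (Or.inr (Or.inl ⟨⟨0, hg⟩, ⟨n - 2, hl⟩, Nat.sub_add_cancel hn, rfl⟩)))))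
  simp only [map_mul, map_inv, mul_inv_eq_one, mul_mul_eq_iff_sq_eq_one] at h
  rwa [classOf_sg_eq i ⟨n - 2, hl⟩]

def ofModel (hg : 1 ≤ g) (hn : 2 ≤ n) :
    Multiplicative (AbModel g) →* Abelianization (SurfaceBraidGroup n g) :=
  AddMonoidHom.toMultiplicativeLeft <|
    AbModel.lift (fun i ↦ Additive.ofMul (classOf (ag n g i)))
      (fun i ↦ Additive.ofMul (classOf (bg n g i))) (Additive.ofMul (classOf (sg n g ⟨0, by omega⟩)))
      (by rw [← ofMul_pow, classOf_sg_sq hg, ofMul_one])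

open Multiplicative

variable (hg : 1 ≤ g) (hn : 2 ≤ n)

@[simp] theorem ofModel_single_fst (i : Fin g) :
    ofModel hg hn (ofAdd (Pi.single i 1, 0, 0)) =
      Abelianization.of (PresentedGroup.of (.inr (.inl i))) := by
  simp [ofModel, ag]

@[simp] theorem ofModel_single_snd (i : Fin g) :
    ofModel hg hn (ofAdd (0, Pi.single i 1, 0)) =
      Abelianization.of (PresentedGroup.of (.inr (.inr i))) := by
  simp [ofModel, bg]

theorem ofModel_one_thd (i : Fin (n - 1)) :
    ofModel hg hn (ofAdd (0, 0, 1)) = Abelianization.of (PresentedGroup.of (.inl i)) := by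
  simpa [ofModel, sg] using classOf_sg_eq _ i

theorem ofModel_comp_toModel :
    (ofModel hg hn).comp toModel = MonoidHom.id (Abelianization (SurfaceBraidGroup n g)) := by
  refine Abelianization.hom_ext _ _ (PresentedGroup.ext fun x ↦ ?_)
  rcases x with i | i | i
  · simpa [generatorImage] using ofModel_one_thd hg hn i
  · simp [generatorImage]
  · simp [generatorImage]

theorem toModel_comp_ofModel :
    toModel.comp (ofModel hg hn) = MonoidHom.id (Multiplicative (AbModel g)) := by
  refine MonoidHom.toAdditive.injective (AbModel.addMonoidHom_ext (fun i ↦ ?_) (fun i ↦ ?_) ?_)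
  · show toModel (ofModel hg hn (ofAdd (Pi.single i 1, 0, 0))) = ofAdd (Pi.single i 1, 0, 0)
    simp [generatorImage]
  · show toModel (ofModel hg hn (ofAdd (0, Pi.single i 1, 0))) = ofAdd (0, Pi.single i 1, 0)
    simp [generatorImage]
  · show toModel (ofModel hg hn (ofAdd (0, 0, 1))) = ofAdd (0, 0, 1)
    simp [ofModel_one_thd hg hn ⟨0, by omega⟩, generatorImage]

end SurfaceBraidGroup

/-- For `g ≥ 1` and `n ≥ 2`, the abelianization of the surface braid group
`B_n(Σ_{g,1})` is `ℤ^{2g} × ℤ/2ℤ`, with the classes of the `aᵢ`, `bᵢ` mapping to the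
standard basis vectors of `ℤ^{2g} = ℤ^g × ℤ^g` (hence freely generating that factor),
and the common class of the `σᵢ` mapping to the generator of the `ℤ/2ℤ` factor. -/
theorem stmt_5 (g n : ℕ) (hg : 1 ≤ g) (hn : 2 ≤ n) :
    ∃ e : Abelianization (SurfaceBraidGroup n g) ≃*
        Multiplicative ((Fin g → ℤ) × (Fin g → ℤ) × ZMod 2),
      (∀ i : Fin g,
        e (Abelianization.of (PresentedGroup.of (rels := sbRels n g) (Sum.inr (Sum.inl i)))) =
          Multiplicative.ofAdd (Pi.single i 1, 0, 0)) ∧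
      (∀ i : Fin g,
        e (Abelianization.of (PresentedGroup.of (rels := sbRels n g) (Sum.inr (Sum.inr i)))) =
          Multiplicative.ofAdd (0, Pi.single i 1, 0)) ∧
      (∀ i : Fin (n - 1),
        e (Abelianization.of (PresentedGroup.of (rels := sbRels n g) (Sum.inl i))) =
          Multiplicative.ofAdd (0, 0, 1)) := by
  open SurfaceBraidGroup in
  exact ⟨toModel.toMulEquiv (ofModel hg hn) (ofModel_comp_toModel hg hn)
      (toModel_comp_ofModel hg hn), fun _ ↦ toModel_of _, fun _ ↦ toModel_of _,
    fun _ ↦ toModel_of _⟩
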